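/- Under the No-Boundary overlay construction, for any s ∈ G_i with s not a boundary vertex, and any boundary vertex t ∈ B with t ∉ G_i, the global shortest distance satisfies d_G(s,t) = min over b_p ∈ B_i of [ d_{G_i}(s, b_p) + d_{G̃}(b_p, t) ]. -/

import Mathlib

open scoped ENNReal Classical

namespace PSP

/-- A weighted undirected graph: symmetric adjacency and a weight function
with values in `ℝ≥0∞` (so weights are non-negative). -/
structure WGraph (V : Type*) where
  Adj : V → V → Prop
  symm : ∀ {u v}, Adj u v → Adj v u
  w : V → V → ℝ≥0∞

variable {V : Type*} {ι : Type*}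

/-- Sum of `f` over consecutive pairs of a list. -/
noncomputable def pairSum (f : V → V → ℝ≥0∞) : List V → ℝ≥0∞
  | a :: b :: rest => f a b + pairSum f (b :: rest)
  | _ => 0

/-- Weighted length of a walk (given as a list of vertices). -/
noncomputable def wlen (G : WGraph V) (l : List V) : ℝ≥0∞ := pairSum G.w l

/-- `l` is a walk in `G` from `s` to `t`: consecutive vertices are adjacent,
the first vertex is `s` and the last is `t`. -/
def IsWalk (G : WGraph V) (s t : V) (l : List V) : Prop :=
  l.Chain' G.Adj ∧ l.head? = some s ∧ l.getLast? = some t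

/-- Shortest-path distance in `G` (`⊤` if no walk exists). -/
noncomputable def dist (G : WGraph V) (s t : V) : ℝ≥0∞ :=
  sInf {x | ∃ l, IsWalk G s t l ∧ wlen G l = x}

/-- Induced subgraph on a vertex set `S`. -/
def induce (G : WGraph V) (S : Set V) : WGraph V where
  Adj u v := G.Adj u v ∧ u ∈ S ∧ v ∈ S
  symm h := ⟨G.symm h.1, h.2.2, h.2.1⟩
  w := G.w

/-- A partition of the vertex set is given by a function `P : V → ι`
assigning each vertex its partition index. The set of all boundary
vertices: vertices having a neighbor in another partition. -/
def bdry (G : WGraph V) (P : V → ι) : Set V :=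
  {v | ∃ u, G.Adj v u ∧ P u ≠ P v}

/-- Boundary vertices of partition `i`. -/
def bdryIn (G : WGraph V) (P : V → ι) (i : ι) : Set V :=
  {v | P v = i ∧ ∃ u, G.Adj v u ∧ P u ≠ i}

/-- The induced subgraph `G_i` of partition `i`. -/
def partGraph (G : WGraph V) (P : V → ι) (i : ι) : WGraph V :=
  induce G {x | P x = i}

/-- The No-Boundary overlay graph `G̃`: vertices are boundary vertices; for each
partition, each boundary pair gets an edge of weight equal to the *local*
partition distance; inter-partition edges of `G` keep their original weight. -/
noncomputable def overlay (G : WGraph V) (P : V → ι) : WGraph V where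
  Adj u v := (P u = P v ∧ u ∈ bdry G P ∧ v ∈ bdry G P) ∨ (P u ≠ P v ∧ G.Adj u v)
  symm := by
    rintro u v (⟨h1, h2, h3⟩ | ⟨h1, h2⟩)
    · exact Or.inl ⟨h1.symm, h3, h2⟩
    · exact Or.inr ⟨fun h => h1 h.symm, G.symm h2⟩
  w u v := if P u = P v then dist (partGraph G P (P u)) u v else G.w u v

/-- A half-connected boundary vertex: has a non-boundary neighbor in its own partition. -/
def halfC (G : WGraph V) (P : V → ι) (b : V) : Prop :=
  b ∈ bdry G P ∧ ∃ u, G.Adj b u ∧ P u = P b ∧ u ∉ bdry G P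

/-- A full-connected boundary vertex: all in-partition neighbors are boundary vertices. -/
def fullC (G : WGraph V) (P : V → ι) (b : V) : Prop :=
  b ∈ bdry G P ∧ ∀ u, G.Adj b u → P u = P b → u ∈ bdry G P

/-- The pruned overlay graph `G̃'`, with inserted boundary-pair weights `ω`:
edges among half-connected boundary pairs of the same partition (weight `ω`),
all inter-partition edges, and the original in-partition adjacent edges of
full-connected boundary vertices. -/
noncomputable def pruned (G : WGraph V) (P : V → ι) (ω : V → V → ℝ≥0∞) : WGraph V where
  Adj u v :=
    (P u = P v ∧ halfC G P u ∧ halfC G P v) ∨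
    (P u ≠ P v ∧ G.Adj u v) ∨
    (P u = P v ∧ G.Adj u v ∧ u ∈ bdry G P ∧ v ∈ bdry G P ∧ (fullC G P u ∨ fullC G P v))
  symm := by
    rintro u v (⟨h1, h2, h3⟩ | ⟨h1, h2⟩ | ⟨h1, h2, h3, h4, h5⟩)
    · exact Or.inl ⟨h1.symm, h3, h2⟩
    · exact Or.inr (Or.inl ⟨fun h => h1 h.symm, G.symm h2⟩)
    · exact Or.inr (Or.inr ⟨h1.symm, G.symm h2, h4, h3, h5.symm⟩)
  w u v := if P u = P v ∧ halfC G P u ∧ halfC G P v then ω u v else G.w u v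

/-- The augmented partition graph `G'_i`: the induced subgraph `G_i` plus, for each
boundary pair `b₁ b₂ ∈ B_i`, an inserted edge of weight `ω b₁ b₂` (taking the
minimum with an already-existing edge weight). -/
noncomputable def augment (G : WGraph V) (P : V → ι) (i : ι) (ω : V → V → ℝ≥0∞) : WGraph V where
  Adj u v := (G.Adj u v ∧ P u = i ∧ P v = i) ∨ (u ∈ bdryIn G P i ∧ v ∈ bdryIn G P i)
  symm := by
    rintro u v (⟨h1, h2, h3⟩ | ⟨h1, h2⟩)
    · exact Or.inl ⟨G.symm h1, h3, h2⟩
    · exact Or.inr ⟨h2, h1⟩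
  w u v :=
    if u ∈ bdryIn G P i ∧ v ∈ bdryIn G P i then
      (if G.Adj u v ∧ P u = i ∧ P v = i then min (ω u v) (G.w u v) else ω u v)
    else G.w u v

/-- Graph obtained from `G` by adding, for every pair `u v ∈ S`, a shortcut edge
of weight `dist G u v` (taking the minimum with an already-existing edge weight). -/
noncomputable def shortcut (G : WGraph V) (S : Set V) : WGraph V where
  Adj u v := G.Adj u v ∨ (u ∈ S ∧ v ∈ S)
  symm := by
    rintro u v (h | ⟨h1, h2⟩)
    · exact Or.inl (G.symm h)
    · exact Or.inr ⟨h2, h1⟩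
  w u v :=
    if u ∈ S ∧ v ∈ S then
      (if G.Adj u v then min (dist G u v) (G.w u v) else dist G u v)
    else G.w u v

/-- Vertex-splitting construction: each cut vertex `x ∈ X` keeps its neighbors in
group `N x 0`; for `1 ≤ i ≤ l x` a duplicate `(x, i)` is created, connected to the
vertices of `N x i` with the original weights and to `x` by a zero-weight edge. -/
noncomputable def split (G : WGraph V) (X : Set V) (N : V → ℕ → Set V) (l : V → ℕ) :
    WGraph (V ⊕ V × ℕ) where
  Adj a b := match a, b with
    | .inl u, .inl v => G.Adj u v ∧ (u ∈ X → v ∈ N u 0) ∧ (v ∈ X → u ∈ N v 0)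
    | .inl v, .inr (x, i) => x ∈ X ∧ 1 ≤ i ∧ i ≤ l x ∧ ((G.Adj x v ∧ v ∈ N x i) ∨ v = x)
    | .inr (x, i), .inl v => x ∈ X ∧ 1 ≤ i ∧ i ≤ l x ∧ ((G.Adj x v ∧ v ∈ N x i) ∨ v = x)
    | .inr _, .inr _ => False
  symm := by
    rintro (u | ⟨x, i⟩) (v | ⟨y, j⟩) h
    · exact ⟨G.symm h.1, h.2.2, h.2.1⟩
    · exact h
    · exact h
    · exact h.elim
  w a b := match a, b with
    | .inl u, .inl v => G.w u v
    | .inl v, .inr (x, _) => if v = x then 0 else G.w x v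
    | .inr (x, _), .inl v => if v = x then 0 else G.w x v
    | .inr _, .inr _ => 0


/-!
A walk from `s ∈ G_i` to `t ∉ G_i` leaves `G_i` for the first time at some `b ∈ B_i`: before `b`
it runs inside `G_i`, and the rest is a walk in `G`, of length at least `d_G(b, t) = d_G̃(b, t)`.
Conversely, `d_G(s, t) ≤ d_G(s, b) + d_G(b, t) ≤ d_{G_i}(s, b) + d_G̃(b, t)` for every `b ∈ B_i`.
-/

def innerBoundary (G : WGraph V) (S : Set V) : Set V :=
  {b | b ∈ S ∧ ∃ u, G.Adj b u ∧ u ∉ S}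

section Walks

variable {G : WGraph V} {s t : V}

lemma wlen_cons_cons (a b : V) (l : List V) :
    wlen G (a :: b :: l) = G.w a b + wlen G (b :: l) := rfl

@[simp]
lemma wlen_induce (S : Set V) (l : List V) : wlen (induce G S) l = wlen G l := rfl

lemma not_isWalk_nil : ¬ IsWalk G s t [] := by
  simp [IsWalk]

lemma isWalk_singleton {a : V} : IsWalk G s t [a] ↔ a = s ∧ a = t :=
  ⟨fun ⟨_, hs, ht⟩ => ⟨Option.some.inj hs, Option.some.inj ht⟩,
    fun ⟨hs, ht⟩ => ⟨List.isChain_singleton a, by rw [hs]; rfl, by rw [ht]; rfl⟩⟩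

lemma isWalk_cons_cons {a b : V} {l : List V} :
    IsWalk G s t (a :: b :: l) ↔ a = s ∧ G.Adj a b ∧ IsWalk G b t (b :: l) := by
  constructor
  · rintro ⟨hc, hs, ht⟩
    obtain ⟨hab, hc⟩ := List.isChain_cons_cons.1 hc
    exact ⟨Option.some.inj hs, hab, hc, rfl, by simpa using ht⟩
  · rintro ⟨rfl, hab, hc, -, ht⟩
    exact ⟨List.isChain_cons_cons.2 ⟨hab, hc⟩, rfl, by simpa using ht⟩

lemma IsWalk.eq_cons {l : List V} (h : IsWalk G s t l) : ∃ l', l = s :: l' := by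
  obtain ⟨_, hs, _⟩ := h
  cases l with
  | nil => simp at hs
  | cons a l => exact ⟨l, by simp_all⟩

lemma IsWalk.dist_le {l : List V} (h : IsWalk G s t l) : dist G s t ≤ wlen G l :=
  sInf_le ⟨l, h, rfl⟩

lemma le_dist_of_forall {x : ℝ≥0∞} (h : ∀ l, IsWalk G s t l → x ≤ wlen G l) :
    x ≤ dist G s t :=
  le_sInf <| by rintro _ ⟨l, hl, rfl⟩; exact h l hl

lemma IsWalk.of_induce {S : Set V} {l : List V} (h : IsWalk (induce G S) s t l) :
    IsWalk G s t l :=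
  ⟨h.1.imp fun _ _ hab => hab.1, h.2⟩

lemma IsWalk.append {m : V} {l₁ l₂ : List V} (h₁ : IsWalk G s m l₁) (h₂ : IsWalk G m t l₂) :
    IsWalk G s t (l₁ ++ l₂.tail) ∧ wlen G (l₁ ++ l₂.tail) = wlen G l₁ + wlen G l₂ := by
  induction l₁ generalizing s with
  | nil => exact absurd h₁ not_isWalk_nil
  | cons a l₁ ih =>
    cases l₁ with
    | nil =>
      obtain ⟨rfl, rfl⟩ := isWalk_singleton.1 h₁
      obtain ⟨l₂, rfl⟩ := h₂.eq_cons
      simpa [wlen, pairSum] using h₂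
    | cons b l₁ =>
      obtain ⟨rfl, hab, hb⟩ := isWalk_cons_cons.1 h₁
      obtain ⟨hw, hlen⟩ := ih hb
      refine ⟨isWalk_cons_cons.2 ⟨rfl, hab, hw⟩, ?_⟩
      simp only [List.cons_append, wlen_cons_cons] at hlen ⊢
      rw [hlen, add_assoc]

lemma IsWalk.exists_split_innerBoundary {S : Set V} {l : List V} (h : IsWalk G s t l)
    (hs : s ∈ S) (ht : t ∉ S) :
    ∃ b ∈ innerBoundary G S, ∃ l₁ l₂, IsWalk (induce G S) s b l₁ ∧ IsWalk G b t l₂ ∧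
      wlen G l₁ + wlen G l₂ = wlen G l := by
  induction l generalizing s with
  | nil => exact absurd h not_isWalk_nil
  | cons a l ih =>
    cases l with
    | nil =>
      obtain ⟨rfl, rfl⟩ := isWalk_singleton.1 h
      exact absurd hs ht
    | cons c l =>
      obtain ⟨rfl, hac, hc⟩ := isWalk_cons_cons.1 h
      by_cases hcS : c ∈ S
      · obtain ⟨b, hb, l₁, l₂, h₁, h₂, hlen⟩ := ih hc hcS
        obtain ⟨l₁, rfl⟩ := h₁.eq_cons
        refine ⟨b, hb, a :: c :: l₁, l₂, isWalk_cons_cons.2 ⟨rfl, ⟨hac, hs, hcS⟩, h₁⟩, h₂, ?_⟩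
        rw [wlen_cons_cons, wlen_cons_cons, ← hlen, add_assoc]
      · exact ⟨a, ⟨hs, c, hac, hcS⟩, [a], a :: c :: l, isWalk_singleton.2 ⟨rfl, rfl⟩, h,
          by simp [wlen, pairSum]⟩

end Walks

section Dist

variable (G : WGraph V)

lemma dist_triangle (s m t : V) : dist G s t ≤ dist G s m + dist G m t := by
  simp only [dist]
  rw [ENNReal.sInf_add]
  refine le_iInf₂ ?_
  rintro _ ⟨l₁, h₁, rfl⟩
  rw [ENNReal.add_sInf]
  refine le_iInf₂ ?_
  rintro _ ⟨l₂, h₂, rfl⟩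
  obtain ⟨hw, hlen⟩ := h₁.append h₂
  exact hlen ▸ hw.dist_le

lemma dist_le_dist_induce (S : Set V) (s t : V) : dist G s t ≤ dist (induce G S) s t :=
  le_dist_of_forall fun _ hl => hl.of_induce.dist_le

theorem dist_eq_iInf_innerBoundary {S : Set V} {s t : V} (hs : s ∈ S) (ht : t ∉ S) :
    dist G s t = ⨅ b ∈ innerBoundary G S, dist (induce G S) s b + dist G b t := by
  refine le_antisymm ?_ ?_
  · exact le_iInf₂ fun b _ =>
      (dist_triangle G s b t).trans (add_le_add_left (dist_le_dist_induce G S s b) _)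
  · refine le_dist_of_forall fun l hl => ?_
    obtain ⟨b, hb, l₁, l₂, h₁, h₂, hlen⟩ := hl.exists_split_innerBoundary hs ht
    calc ⨅ b ∈ innerBoundary G S, dist (induce G S) s b + dist G b t
        ≤ dist (induce G S) s b + dist G b t := biInf_le _ hb
      _ ≤ wlen G l₁ + wlen G l₂ := add_le_add h₁.dist_le h₂.dist_le
      _ = wlen G l := hlen

end Dist

lemma bdryIn_subset_bdry (G : WGraph V) (P : V → ι) (i : ι) : bdryIn G P i ⊆ bdry G P :=
  fun _ ⟨hv, u, hadj, hu⟩ => ⟨u, hadj, hv ▸ hu⟩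

theorem stmt4_general {V ι : Type*} (G : WGraph V) (P : V → ι) (i : ι)
    (s t : V) (hs : P s = i)
    (htB : t ∈ bdry G P) (hti : P t ≠ i)
    (hov : ∀ b1 ∈ bdry G P, ∀ b2 ∈ bdry G P,
      dist (overlay G P) b1 b2 = dist G b1 b2) :
    dist G s t =
      ⨅ bp ∈ bdryIn G P i,
        dist (partGraph G P i) s bp + dist (overlay G P) bp t := by
  rw [dist_eq_iInf_innerBoundary G (S := {x | P x = i}) hs hti]
  refine biInf_congr fun bp hbp => ?_
  rw [hov bp (bdryIn_subset_bdry G P i hbp) t htB]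
  rfl

/-- cross-partition query, `s` non-boundary, `t` boundary in another partition. -/
theorem stmt4 {V ι : Type*} (G : WGraph V) (P : V → ι) (i : ι)
    (hconn : ∀ u v : V, dist G u v ≠ ⊤)
    (s t : V) (hs : P s = i) (hsb : s ∉ bdry G P)
    (htB : t ∈ bdry G P) (hti : P t ≠ i)
    (hov : ∀ b1 ∈ bdry G P, ∀ b2 ∈ bdry G P,
      dist (overlay G P) b1 b2 = dist G b1 b2) :
    dist G s t =
      ⨅ bp ∈ bdryIn G P i,
        dist (partGraph G P i) s bp + dist (overlay G P) bp t :=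
  stmt4_general G P i s t hs htB hti hov

end PSP
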